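/- For β₃(ℓ) := (1/ℓ)[3/2 - γ - (1 - 3/(2ℓ))(1 - 1/ℓ)ψ(1/ℓ) - (1/ℓ)(1 - 6/ℓ)ψ(2/ℓ) - (3/(2ℓ))(1 + 3/ℓ)ψ(3/ℓ)], one has β₃(ℓ) → 1 as ℓ → ∞. -/

import Mathlib

/-- The digamma function `ψ(x) = Γ'(x)/Γ(x)`. -/
noncomputable def digamma (x : ℝ) : ℝ := deriv Real.Gamma x / Real.Gamma x

/-- `g₂(x) = 3/2 - γ - ψ(x+1) - 2x(ψ(2x) - ψ(x))`. -/
noncomputable def g2 (x : ℝ) : ℝ :=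
  3 / 2 - Real.eulerMascheroniConstant - digamma (x + 1)
    - 2 * x * (digamma (2 * x) - digamma x)

/-- `g₃(x) = 2 - γ - ψ(x+1) + (x/2)(5-3x)ψ(x) - x(1-6x)ψ(2x) - (3x/2)(1+3x)ψ(3x)`. -/
noncomputable def g3 (x : ℝ) : ℝ :=
  2 - Real.eulerMascheroniConstant - digamma (x + 1)
    + x / 2 * (5 - 3 * x) * digamma x
    - x * (1 - 6 * x) * digamma (2 * x)
    - 3 * x / 2 * (1 + 3 * x) * digamma (3 * x)

/-- `β₁(ℓ) = (1/ℓ)(-γ - ψ(1/ℓ))`. -/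
noncomputable def beta1 (l : ℝ) : ℝ :=
  1 / l * (-Real.eulerMascheroniConstant - digamma (1 / l))

/-- `β₂(ℓ) = (1/ℓ)[1 - γ - (1 - 2/ℓ)ψ(1/ℓ) - (2/ℓ)ψ(2/ℓ)]`. -/
noncomputable def beta2 (l : ℝ) : ℝ :=
  1 / l * (1 - Real.eulerMascheroniConstant - (1 - 2 / l) * digamma (1 / l)
    - 2 / l * digamma (2 / l))

/-- `β₃(ℓ) = (1/ℓ)[3/2 - γ - (1 - 3/(2ℓ))(1 - 1/ℓ)ψ(1/ℓ) - (1/ℓ)(1 - 6/ℓ)ψ(2/ℓ)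
  - (3/(2ℓ))(1 + 3/ℓ)ψ(3/ℓ)]`. -/
noncomputable def beta3 (l : ℝ) : ℝ :=
  1 / l * (3 / 2 - Real.eulerMascheroniConstant
    - (1 - 3 / (2 * l)) * (1 - 1 / l) * digamma (1 / l)
    - 1 / l * (1 - 6 / l) * digamma (2 / l)
    - 3 / (2 * l) * (1 + 3 / l) * digamma (3 / l))

/-!
The recurrence `ψ(s) = ψ(s + 1) - 1/s` gives `x ψ(c x) = x ψ(c x + 1) - 1/c`, which removes the
poles of `ψ` at `0` from `β₃(1/x)`: it becomes a polynomial in `x`, `x ψ(x + 1)`, `x ψ(2x + 1)`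
and `x ψ(3x + 1)`. Since `ψ` is continuous at `1` (`Γ` is holomorphic on `Re s > 0`), this
expression is continuous at `x = 0`, where only the term `(1 - 3x/2)(1 - x) · 1` survives.
-/

open Filter Set

lemma Real.Gamma_eq_re_complex_Gamma : Real.Gamma = fun x : ℝ => (Complex.Gamma x).re := by
  funext x
  simp [Complex.Gamma_ofReal]

lemma Real.contDiffOn_Gamma_Ioi {n : WithTop ℕ∞} : ContDiffOn ℝ n Real.Gamma (Ioi 0) := by
  have hU : IsOpen {z : ℂ | 0 < z.re} := isOpen_lt continuous_const Complex.continuous_re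
  have hdiff : DifferentiableOn ℂ Complex.Gamma {z : ℂ | 0 < z.re} := fun z hz =>
    (Complex.differentiableAt_Gamma z fun m hm => by
      have : (0 : ℝ) < -m := by simpa [hm] using hz
      linarith [(Nat.cast_nonneg m : (0 : ℝ) ≤ m)]).differentiableWithinAt
  intro x hx
  have hx' : ContDiffAt ℂ n Complex.Gamma (x : ℂ) :=
    (hdiff.contDiffOn hU).contDiffAt (hU.mem_nhds (by simpa using hx))
  rw [Real.Gamma_eq_re_complex_Gamma]
  exact hx'.real_of_complex.contDiffWithinAt

lemma Real.deriv_Gamma_eq_re {x : ℝ} (hx : ∀ m : ℕ, x ≠ -m) :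
    deriv Real.Gamma x = (deriv Complex.Gamma x).re := by
  have hx' : ∀ m : ℕ, (x : ℂ) ≠ -m := fun m hm => hx m (by exact_mod_cast hm)
  have h := (Complex.differentiableAt_Gamma _ hx').hasDerivAt.real_of_complex
  rw [← Real.Gamma_eq_re_complex_Gamma] at h
  exact h.deriv

lemma digamma_eq_re_complex_digamma {x : ℝ} (hx : ∀ m : ℕ, x ≠ -m) :
    digamma x = (Complex.digamma x).re := by
  rw [digamma, Complex.digamma_def, logDeriv_apply, Complex.Gamma_ofReal, Complex.div_ofReal_re,
    Real.deriv_Gamma_eq_re hx]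

lemma digamma_add_one {x : ℝ} (hx : ∀ m : ℕ, x ≠ -m) : digamma (x + 1) = digamma x + x⁻¹ := by
  have hx1 : ∀ m : ℕ, x + 1 ≠ -m := fun m hm => hx (m + 1) (by push_cast; linarith)
  have hx' : ∀ m : ℕ, (x : ℂ) ≠ -m := fun m hm => hx m (by exact_mod_cast hm)
  rw [digamma_eq_re_complex_digamma hx1, digamma_eq_re_complex_digamma hx, Complex.ofReal_add,
    Complex.ofReal_one, Complex.digamma_apply_add_one _ hx', Complex.add_re, ← Complex.ofReal_inv,
    Complex.ofReal_re]

lemma continuousAt_digamma {x : ℝ} (hx : 0 < x) : ContinuousAt digamma x := by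
  have hG : ContDiffOn ℝ 1 Real.Gamma (Ioi 0) := Real.contDiffOn_Gamma_Ioi
  have hx' : Ioi (0 : ℝ) ∈ nhds x := isOpen_Ioi.mem_nhds hx
  exact ((hG.continuousOn_deriv_of_isOpen isOpen_Ioi le_rfl).continuousAt hx').div
    (hG.continuousOn.continuousAt hx') (Real.Gamma_pos_of_pos hx).ne'

lemma mul_digamma_mul {c x : ℝ} (hc : 0 < c) (hx : 0 < x) :
    x * digamma (c * x) = x * digamma (c * x + 1) - 1 / c := by
  have hcx : ∀ m : ℕ, c * x ≠ -m := fun m hm => by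
    nlinarith [mul_pos hc hx, (Nat.cast_nonneg m : (0 : ℝ) ≤ m)]
  rw [digamma_add_one hcx]
  field_simp
  ring

/-- `β₃(1/x)`, with each `x ψ(c x)` rewritten as `x ψ(c x + 1) - 1/c`. -/
noncomputable def beta3Reg (x : ℝ) : ℝ :=
  x * (3 / 2 - Real.eulerMascheroniConstant)
    - (1 - 3 / 2 * x) * (1 - x) * (x * digamma (x + 1) - 1)
    - x * (1 - 6 * x) * (x * digamma (2 * x + 1) - 1 / 2)
    - 3 / 2 * x * (1 + 3 * x) * (x * digamma (3 * x + 1) - 1 / 3)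

lemma beta3_eq_beta3Reg_inv {l : ℝ} (hl : 0 < l) : beta3 l = beta3Reg l⁻¹ := by
  have hx : 0 < l⁻¹ := inv_pos.2 hl
  have h1 := mul_digamma_mul one_pos hx
  have h2 := mul_digamma_mul two_pos hx
  have h3 := mul_digamma_mul three_pos hx
  simp only [one_mul] at h1
  rw [beta3, beta3Reg]
  simp only [div_eq_mul_inv, one_mul]
  linear_combination (-(1 - 3 / 2 * l⁻¹) * (1 - l⁻¹)) * h1 - l⁻¹ * (1 - 6 * l⁻¹) * h2
    - 3 / 2 * l⁻¹ * (1 + 3 * l⁻¹) * h3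

lemma continuousAt_beta3Reg_zero : ContinuousAt beta3Reg 0 := by
  have hψ : ∀ c : ℝ, ContinuousAt (fun x => digamma (c * x + 1)) 0 := fun c =>
    (continuousAt_digamma (by simp)).comp (by fun_prop)
  have hψ1 : ContinuousAt (fun x => digamma (x + 1)) 0 := by simpa using hψ 1
  have hψ2 := hψ 2
  have hψ3 := hψ 3
  unfold beta3Reg
  fun_prop

lemma beta3Reg_zero : beta3Reg 0 = 1 := by norm_num [beta3Reg]

theorem beta3_tendsto_one : Filter.Tendsto beta3 Filter.atTop (nhds 1) := by
  have hReg : Tendsto (fun l : ℝ => beta3Reg l⁻¹) atTop (nhds 1) :=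
    beta3Reg_zero ▸ continuousAt_beta3Reg_zero.tendsto.comp tendsto_inv_atTop_zero
  refine hReg.congr' ?_
  filter_upwards [eventually_gt_atTop 0] with l hl
  exact (beta3_eq_beta3Reg_inv hl).symm
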